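/- With V(s, d^m) = W(s - (1/2)Σ_{r=1}^m d_r, d^m) as above, V satisfies the parity property V(s, d^m) = (-1)^{m+1} V(-s, d^m) for all s. In particular, if m is even then V(0, d^m) = 0; equivalently W(-ξ, d^m) = 0 where ξ = (1/2)Σ d_r (interpreting W as 0 at negative or non-integer arguments, this is consistent). -/

import Mathlib

/-!
Let `Wext d s = W d s + (-1)^(m+1) W d (-s - ∑ d)`; its two terms are supported on `s ≥ 0` and
`s ≤ -∑ d` respectively, and it visibly has the parity `Wext d s₁ = (-1)^(m+1) Wext d s₂` for
`s₁ + s₂ + ∑ d = 0`. We show by induction on `m` that every quasi-polynomial agreeing with `W d`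
for large `s` equals `Wext d`. Removing the weight `D = d 0`, the recurrence
`W d s = W d' s + W d (s - D)` holds for all integers `s` and is inherited by `Wext`, so
`s ↦ f s - f (s - D)` is again a quasi-polynomial which, by induction, equals `Wext d'`. Hence
`f - Wext d` is `D`-periodic; it vanishes for large `s`, so it vanishes identically. For `m = 0`,
`Wext d = 0` and one uses that a quasi-polynomial vanishing for large arguments is zero, since
on each residue class it is a polynomial with infinitely many roots.
-/

/-- Restricted partition number: number of nonnegative integer solutions of
`∑ i, d i * x i = s`. -/
noncomputable def W {m : ℕ} (d : Fin m → ℕ) (s : ℤ) : ℕ :=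
  Nat.card {x : Fin m → ℕ // ∑ i, (d i : ℤ) * (x i : ℤ) = s}

section Solutions

variable {m : ℕ}

lemma W_eq_zero_of_neg (d : Fin m → ℕ) {s : ℤ} (hs : s < 0) : W d s = 0 := by
  have : IsEmpty {x : Fin m → ℕ // ∑ i, (d i : ℤ) * x i = s} :=
    ⟨fun x => hs.not_ge (x.2 ▸ by positivity)⟩
  exact Nat.card_of_isEmpty

lemma W_fin_zero (d : Fin 0 → ℕ) (s : ℤ) : W d s = if s = 0 then 1 else 0 := by
  split_ifs with hs
  · simp [W, hs]
  · simp [W, Ne.symm hs]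

lemma finite_solutions (d : Fin m → ℕ) (hd : ∀ i, 0 < d i) (s : ℤ) :
    Finite {x : Fin m → ℕ // ∑ i, (d i : ℤ) * x i = s} := by
  refine Set.Finite.to_subtype ((Set.finite_Iic fun _ => s.toNat).subset fun x hx i => ?_)
  have hle : (d i : ℤ) * x i ≤ s :=
    hx ▸ Finset.single_le_sum (f := fun j => (d j : ℤ) * x j) (fun j _ => by positivity)
      (Finset.mem_univ i)
  have hdi : (1 : ℤ) ≤ d i := by exact_mod_cast hd i
  have : (x i : ℤ) ≤ s := by nlinarith [(x i).cast_nonneg (α := ℤ)]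
  show x i ≤ s.toNat
  omega

lemma W_succ (d : Fin (m + 1) → ℕ) (hd : ∀ i, 0 < d i) (s : ℤ) :
    W d s = W (Fin.tail d) s + W d (s - d 0) := by
  have sum_cons (a : ℕ) (y : Fin m → ℕ) :
      ∑ i, (d i : ℤ) * ((Fin.cons a y : Fin (m + 1) → ℕ) i : ℤ) =
        d 0 * a + ∑ i, (Fin.tail d i : ℤ) * y i := by
    simp [Fin.sum_univ_succ, Fin.tail]
  let F : {y : Fin m → ℕ // ∑ i, (Fin.tail d i : ℤ) * y i = s} ⊕
      {x : Fin (m + 1) → ℕ // ∑ i, (d i : ℤ) * x i = s - d 0} →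
      {x : Fin (m + 1) → ℕ // ∑ i, (d i : ℤ) * x i = s} :=
    Sum.elim (fun y => ⟨Fin.cons 0 y.1, by rw [sum_cons]; simpa using y.2⟩)
      (fun x => ⟨Fin.cons (x.1 0 + 1) (Fin.tail x.1), by
        have hx := x.2
        rw [← Fin.cons_self_tail x.1, sum_cons] at hx
        rw [sum_cons]; push_cast; linarith⟩)
  have hF : Function.Bijective F := by
    constructor
    · rintro (y | x) (y' | x') h <;> simp [F, Subtype.ext_iff, Fin.cons_inj] at h ⊢
      · exact h
      · rw [← Fin.cons_self_tail x.1, ← Fin.cons_self_tail x'.1, h.1, h.2]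
    · rintro ⟨x, hx⟩
      induction x using Fin.consCases with
      | cons a y =>
        rw [sum_cons] at hx
        rcases a with _ | k
        · exact ⟨.inl ⟨y, by simpa using hx⟩, rfl⟩
        · refine ⟨.inr ⟨Fin.cons k y, ?_⟩, by simp [F]⟩
          rw [sum_cons]; push_cast at hx; linarith
  have := finite_solutions (Fin.tail d) (fun i => hd i.succ) s
  have := finite_solutions d hd (s - d 0)
  rw [W, W, W, ← Nat.card_sum, Nat.card_eq_of_bijective F hF]

end Solutions

open Filter Polynomial

section Reciprocity

variable {m : ℕ}

noncomputable def Wext (d : Fin m → ℕ) (s : ℤ) : ℚ :=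
  W d s + (-1) ^ (m + 1) * W d (-s - ∑ i, (d i : ℤ))

lemma Wext_eq_W_of_pos (d : Fin m → ℕ) {s : ℤ} (hs : 0 < s) : Wext d s = W d s := by
  have : (0 : ℤ) ≤ ∑ i, (d i : ℤ) := by positivity
  simp [Wext, W_eq_zero_of_neg d (show -s - ∑ i, (d i : ℤ) < 0 by linarith)]

lemma Wext_fin_zero (d : Fin 0 → ℕ) : Wext d = 0 := by
  ext s
  simp only [Wext, W_fin_zero]
  split_ifs <;> simp_all

lemma Wext_sub_Wext (d : Fin (m + 1) → ℕ) (hd : ∀ i, 0 < d i) (s : ℤ) :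
    Wext d s - Wext d (s - d 0) = Wext (Fin.tail d) s := by
  have hsum : ∑ i, (d i : ℤ) = d 0 + ∑ i, (Fin.tail d i : ℤ) := Fin.sum_univ_succ _
  have h₁ := W_succ d hd s
  have h₂ := W_succ d hd (-s - ∑ i, (Fin.tail d i : ℤ))
  simp only [Wext]
  rw [show -(s - d 0) - ∑ i, (d i : ℤ) = -s - ∑ i, (Fin.tail d i : ℤ) by rw [hsum]; ring, h₂,
    show -s - ∑ i, (Fin.tail d i : ℤ) - d 0 = -s - ∑ i, (d i : ℤ) by rw [hsum]; ring, h₁]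
  push_cast
  ring

lemma Wext_reflect (d : Fin m → ℕ) {s₁ s₂ : ℤ} (h : s₁ + s₂ + ∑ i, (d i : ℤ) = 0) :
    Wext d s₁ = (-1) ^ (m + 1) * Wext d s₂ := by
  rw [Wext, Wext, show -s₁ - ∑ i, (d i : ℤ) = s₂ by linarith,
    show -s₂ - ∑ i, (d i : ℤ) = s₁ by linarith]
  rcases neg_one_pow_eq_or ℚ (m + 1) with h | h <;> rw [h] <;> ring

end Reciprocity

def IsQuasiPolynomial (L : ℤ) (f : ℤ → ℚ) : Prop :=
  ∀ r : ℤ, ∃ p : ℚ[X], ∀ k : ℤ, f (r + k * L) = p.eval ((r + k * L : ℤ) : ℚ)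

namespace IsQuasiPolynomial

variable {L : ℤ} {f g : ℤ → ℚ}

lemma sub (hf : IsQuasiPolynomial L f) (hg : IsQuasiPolynomial L g) :
    IsQuasiPolynomial L (f - g) := by
  intro r
  obtain ⟨p, hp⟩ := hf r
  obtain ⟨q, hq⟩ := hg r
  exact ⟨p - q, fun k => by simp [hp k, hq k]⟩

lemma comp_sub_const (hf : IsQuasiPolynomial L f) (a : ℤ) :
    IsQuasiPolynomial L (fun s => f (s - a)) := by
  intro r
  obtain ⟨p, hp⟩ := hf (r - a)
  refine ⟨p.comp (X - C (a : ℚ)), fun k => ?_⟩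
  simpa [sub_add_eq_add_sub] using hp k

lemma eq_zero_of_eventually (hL : 0 < L) (hf : IsQuasiPolynomial L f)
    (h : ∀ᶠ s in atTop, f s = 0) : f = 0 := by
  ext r
  obtain ⟨p, hp⟩ := hf r
  have hlim : Tendsto (fun k : ℕ => r + k * L) atTop atTop :=
    tendsto_atTop_add_const_left _ r (tendsto_natCast_atTop_atTop.atTop_mul_const' hL)
  have hroot : ∀ᶠ k : ℕ in atTop, p.IsRoot ((r + k * L : ℤ) : ℚ) :=
    (hlim.eventually h).mono fun k hk => by simpa [hk] using (hp k).symm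
  have hp0 : p = 0 := by
    by_contra hp0
    obtain ⟨k, hk, hk'⟩ := (hroot.and ((tendsto_intCast_atTop_atTop.comp hlim).eventually
      (eventually_atTop_not_isRoot p hp0))).exists
    exact hk' hk
  simpa [hp0] using hp 0

end IsQuasiPolynomial

lemma Function.Periodic.isQuasiPolynomial {L : ℤ} {f : ℤ → ℚ} (hf : Function.Periodic f L) :
    IsQuasiPolynomial L f :=
  fun r => ⟨C (f r), fun k => by simpa using hf.int_mul k r⟩

lemma isQuasiPolynomial_of_periodic_coeff {L : ℤ} {f : ℤ → ℚ} {n : ℕ} (c : Fin n → ℤ → ℚ)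
    (hc : ∀ j, Function.Periodic (c j) L) (hf : ∀ s, f s = ∑ j, c j s * (s : ℚ) ^ (j : ℕ)) :
    IsQuasiPolynomial L f := fun r =>
  ⟨∑ j, C (c j r) * X ^ (j : ℕ), fun k => by
    simp only [hf, eval_finsetSum, eval_mul, eval_C, eval_pow, eval_X, Int.cast_add, Int.cast_mul]
    refine Finset.sum_congr rfl fun j _ => ?_
    rw [show c j (r + k * L) = c j r by simpa using (hc j).int_mul k r]⟩

theorem eq_Wext_of_isQuasiPolynomial {m : ℕ} (d : Fin m → ℕ) (hd : ∀ i, 0 < d i) {L : ℤ}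
    (hL : 0 < L) {f : ℤ → ℚ} (hf : IsQuasiPolynomial L f) (h : ∀ᶠ s in atTop, f s = W d s) :
    f = Wext d := by
  induction m generalizing f with
  | zero =>
    rw [Wext_fin_zero]
    refine hf.eq_zero_of_eventually hL ?_
    filter_upwards [h, eventually_gt_atTop 0] with s hs hs0
    simp [hs, W_fin_zero, hs0.ne']
  | succ n ih =>
    have hd₀ : (0 : ℤ) < d 0 := by exact_mod_cast hd 0
    have hshift : ∀ᶠ s in atTop, f (s - d 0) = W d (s - d 0) := by
      obtain ⟨N, hN⟩ := eventually_atTop.1 h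
      exact eventually_atTop.2 ⟨N + d 0, fun s hs => hN _ (by linarith)⟩
    have hdiff : (fun s => f s - f (s - d 0)) = Wext (Fin.tail d) := by
      refine ih (Fin.tail d) (fun i => hd i.succ) (hf.sub (hf.comp_sub_const _)) ?_
      filter_upwards [h, hshift] with s hs hs'
      rw [hs, hs', W_succ d hd s]
      push_cast
      ring
    have hper : Function.Periodic (f - Wext d) (d 0) := fun s => by
      have h₁ := congrFun hdiff (s + d 0)
      have h₂ := Wext_sub_Wext d hd (s + d 0)
      simp only [add_sub_cancel_right] at h₁ h₂
      simp only [Pi.sub_apply]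
      linarith
    refine sub_eq_zero.mp (hper.isQuasiPolynomial.eq_zero_of_eventually hd₀ ?_)
    filter_upwards [h, eventually_gt_atTop 0] with s hs hs0
    simp [hs, Wext_eq_W_of_pos d hs0]

theorem stmt6_general {m : ℕ} (d : Fin m → ℕ) (hd : ∀ i, 0 < d i)
    (f : ℤ → ℚ)
    (hagree : ∀ s : ℤ, 0 ≤ s → f s = W d s)
    (c : Fin m → ℤ → ℚ)
    (hper : ∀ j s, c j (s + (((Finset.univ : Finset (Fin m)).lcm d : ℕ) : ℤ)) = c j s)
    (hpoly : ∀ s, f s = ∑ j, c j s * (s : ℚ) ^ (j : ℕ)) :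
    (∀ s₁ s₂ : ℤ, s₁ + s₂ + ∑ i, (d i : ℤ) = 0 → f s₁ = (-1) ^ (m + 1) * f s₂) ∧
    (∀ k : ℕ, m = 2 * k → ∀ t : ℤ, 2 * t + ∑ i, (d i : ℤ) = 0 → f t = 0) := by
  have hL : (0 : ℤ) < ((Finset.univ : Finset (Fin m)).lcm d : ℕ) := by
    rw [Nat.cast_pos, Nat.pos_iff_ne_zero, Ne, Finset.lcm_eq_zero_iff]
    rintro ⟨i, -, hi⟩
    exact (hd i).ne' hi
  have hfW : f = Wext d :=
    eq_Wext_of_isQuasiPolynomial d hd hL (isQuasiPolynomial_of_periodic_coeff c hper hpoly)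
      (eventually_atTop.2 ⟨0, hagree⟩)
  have hreflect (s₁ s₂ : ℤ) (h : s₁ + s₂ + ∑ i, (d i : ℤ) = 0) :
      f s₁ = (-1) ^ (m + 1) * f s₂ := by
    rw [hfW]
    exact Wext_reflect d h
  refine ⟨hreflect, fun k hk t ht => ?_⟩
  have := hreflect t t (by linarith)
  rw [hk, pow_succ, pow_mul] at this
  norm_num at this
  linarith

/-- Parity of the Sylvester wave: if `f` is the quasi-polynomial extension of the
restricted partition number `W d` to all integers (with period `lcm d`), then
`V(s) = f(s - ξ)` with `ξ = (∑ d)/2` satisfies `V(s) = (-1)^(m+1) V(-s)`; stated on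
the integers this reads `f s₁ = (-1)^(m+1) f s₂` whenever `s₁ + s₂ + ∑ d = 0`.
In particular, if `m` is even then `V(0) = 0`, i.e. `f t = 0` when `2 t + ∑ d = 0`. -/
theorem stmt6 {m : ℕ} (hm : 1 ≤ m) (d : Fin m → ℕ) (hd : ∀ i, 0 < d i)
    (f : ℤ → ℚ)
    (hagree : ∀ s : ℤ, 0 ≤ s → f s = W d s)
    (c : Fin m → ℤ → ℚ)
    (hper : ∀ j s, c j (s + (((Finset.univ : Finset (Fin m)).lcm d : ℕ) : ℤ)) = c j s)
    (hpoly : ∀ s, f s = ∑ j, c j s * (s : ℚ) ^ (j : ℕ)) :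
    (∀ s₁ s₂ : ℤ, s₁ + s₂ + ∑ i, (d i : ℤ) = 0 → f s₁ = (-1) ^ (m + 1) * f s₂) ∧
    (∀ k : ℕ, m = 2 * k → ∀ t : ℤ, 2 * t + ∑ i, (d i : ℤ) = 0 → f t = 0) :=
  stmt6_general d hd f hagree c hper hpoly
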